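/- arXiv:2405.20961 — 3 statements merged into one kernel-verified Lean document; each statement's English description precedes it below -/
import Mathlib

section
/- Every element h of the normal closure L of b in the free product H = <a> * <b> (a of order N, b of infinite order) can be written uniquely as a product (c_1)^{a^{t_1}} ... (c_l)^{a^{t_l}} where l ≥ 0, each c_j is a nontrivial element of <b>, each t_j is in Z/NZ, and t_j ≠ t_{j+1} for all j < l. -/
/-!
Van der Waerden's trick. Let `G = ⟨a⟩ ∗ ⟨b⟩` act on pairs `(w, t)` of a reduced word `w` and an
offset `t`: `a^s` subtracts `s` from every conjugation index of `w` and adds `s` to `t`, while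
`b^β` multiplies `β` into the leading letter of `w` when its index is `0` (cancelling it if the
exponent becomes `0`) and otherwise prepends the letter `(0, β)`. Evaluation
`(w, t) ↦ w · a^t` is equivariant, and the orbit map `g ↦ g • ([], 0)` inverts it, so every
element of `G` is `w · a^t` for a unique pair. On the normal closure of `b`, the projection
onto `⟨a⟩` forces `t = 0`.
-/

open Monoid

open Coprod Multiplicative

namespace ConjNormalForm

section Reduced

variable {A B : Type*} [Zero B]

def IsReduced (w : List (A × B)) : Prop :=
  (∀ x ∈ w, x.2 ≠ 0) ∧ w.IsChain fun x y => x.1 ≠ y.1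

theorem isReduced_nil : IsReduced ([] : List (A × B)) :=
  ⟨by simp, List.isChain_nil⟩

theorem isReduced_cons {t : A} {β : B} {w : List (A × B)} :
    IsReduced ((t, β) :: w) ↔ β ≠ 0 ∧ (∀ u ∈ w.head?, u.1 ≠ t) ∧ IsReduced w := by
  simp only [IsReduced, List.forall_mem_cons, List.isChain_cons, ne_comm (a := t)]
  tauto

variable [DecidableEq B]

def prepend (s : A) (β : B) (w : List (A × B)) : List (A × B) :=
  if β = 0 then w else (s, β) :: w

theorem isReduced_prepend {w : List (A × B)} (hw : IsReduced w) {s : A}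
    (hs : ∀ u ∈ w.head?, u.1 ≠ s) (β : B) : IsReduced (prepend s β w) := by
  unfold prepend
  split_ifs with hβ
  exacts [hw, isReduced_cons.2 ⟨hβ, hs, hw⟩]

theorem exists_eq_prepend {w : List (A × B)} (hw : IsReduced w) (s : A) :
    ∃ γ v, IsReduced v ∧ (∀ u ∈ v.head?, u.1 ≠ s) ∧ w = prepend s γ v := by
  match w with
  | [] => exact ⟨0, [], isReduced_nil, by simp, by simp [prepend]⟩
  | (t, γ) :: v =>
    obtain ⟨hγ, hv, hvr⟩ := isReduced_cons.1 hw
    by_cases ht : t = s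
    · subst ht
      exact ⟨γ, v, hvr, hv, by simp [prepend, hγ]⟩
    · exact ⟨0, (t, γ) :: v, hw, by simpa using ht, by simp [prepend]⟩

end Reduced

section PushFront

variable {A B : Type*} [DecidableEq A] [DecidableEq B] [AddMonoid B]

def pushFront (s : A) (β : B) : List (A × B) → List (A × B)
  | [] => prepend s β []
  | (t, γ) :: w => if t = s then prepend s (β + γ) w else prepend s β ((t, γ) :: w)

theorem pushFront_prepend {w : List (A × B)} {s : A} (hs : ∀ u ∈ w.head?, u.1 ≠ s) (β γ : B) :
    pushFront s β (prepend s γ w) = prepend s (β + γ) w := by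
  by_cases hγ : γ = 0
  · subst hγ
    match w with
    | [] => simp [prepend, pushFront]
    | (t, δ) :: v => simp [prepend, pushFront, (by simpa using hs : t ≠ s)]
  · simp [prepend, pushFront, hγ]

theorem isReduced_pushFront {w : List (A × B)} (hw : IsReduced w) (s : A) (β : B) :
    IsReduced (pushFront s β w) := by
  obtain ⟨γ, v, hv, hs, rfl⟩ := exists_eq_prepend hw s
  rw [pushFront_prepend hs]
  exact isReduced_prepend hv hs _

theorem pushFront_pushFront {w : List (A × B)} (hw : IsReduced w) (s : A) (β γ : B) :
    pushFront s β (pushFront s γ w) = pushFront s (β + γ) w := by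
  obtain ⟨δ, v, -, hs, rfl⟩ := exists_eq_prepend hw s
  rw [pushFront_prepend hs, pushFront_prepend hs, pushFront_prepend hs, add_assoc]

theorem pushFront_zero {w : List (A × B)} (hw : IsReduced w) (s : A) : pushFront s 0 w = w := by
  obtain ⟨δ, v, -, hs, rfl⟩ := exists_eq_prepend hw s
  rw [pushFront_prepend hs, zero_add]

end PushFront

section Shift

variable {A B : Type*}

def shift [Sub A] (s : A) (w : List (A × B)) : List (A × B) := w.map fun p => (p.1 - s, p.2)

theorem shift_zero [AddGroup A] (w : List (A × B)) : shift 0 w = w := by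
  simp [shift]

theorem shift_shift [AddGroup A] (s t : A) (w : List (A × B)) :
    shift s (shift t w) = shift (s + t) w := by
  simp [shift, Function.comp_def, sub_eq_add_neg, add_assoc]

theorem isReduced_shift [AddGroup A] [Zero B] {w : List (A × B)} (hw : IsReduced w) (s : A) :
    IsReduced (shift s w) := by
  refine ⟨fun x hx => ?_, ?_⟩
  · obtain ⟨p, hp, rfl⟩ := List.mem_map.1 hx
    exact hw.1 p hp
  rw [shift, List.isChain_map]
  exact hw.2.imp fun _ _ h => by simpa using h

end Shift

section Group

variable {A B : Type*} [AddGroup A] [AddGroup B]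

def conjB (t : A) (β : B) : Multiplicative A ∗ Multiplicative B :=
  (inl (ofAdd t))⁻¹ * inr (ofAdd β) * inl (ofAdd t)

theorem conjB_zero (t : A) : conjB t (0 : B) = 1 := by
  simp [conjB]

theorem conjB_add (t : A) (β γ : B) : conjB t (β + γ) = conjB t β * conjB t γ := by
  simp only [conjB, ofAdd_add, map_mul, mul_assoc, mul_inv_cancel_left]

theorem inl_mul_conjB (s t : A) (β : B) :
    inl (ofAdd s) * conjB t β = conjB (t - s) β * inl (ofAdd s) := by
  rw [conjB, conjB, ofAdd_sub, map_div]
  simp only [div_eq_mul_inv, mul_inv_rev, inv_inv, mul_assoc, inv_mul_cancel, mul_one]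

theorem fst_conjB (t : A) (β : B) :
    fst (conjB t β : Multiplicative A ∗ Multiplicative B) = 1 := by
  rw [conjB, map_mul, map_mul, map_inv, fst_apply_inl, fst_apply_inr, mul_one, inv_mul_cancel]

def evalWord (w : List (A × B)) : Multiplicative A ∗ Multiplicative B :=
  (w.map fun x => conjB x.1 x.2).prod

@[simp] theorem evalWord_nil : evalWord ([] : List (A × B)) = 1 := rfl

@[simp] theorem evalWord_cons (t : A) (β : B) (w : List (A × B)) :
    evalWord ((t, β) :: w) = conjB t β * evalWord w := rfl

theorem inl_mul_evalWord (s : A) (w : List (A × B)) :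
    inl (ofAdd s) * evalWord w = evalWord (shift s w) * inl (ofAdd s) := by
  induction w with
  | nil => simp [shift]
  | cons p w ih =>
    rw [evalWord_cons, ← mul_assoc, inl_mul_conjB, mul_assoc, ih]
    simp [shift, mul_assoc]

variable [DecidableEq B]

theorem evalWord_prepend (s : A) (β : B) (w : List (A × B)) :
    evalWord (prepend s β w) = conjB s β * evalWord w := by
  unfold prepend
  split_ifs with hβ
  · rw [hβ, conjB_zero, one_mul]
  · rfl

theorem evalWord_pushFront [DecidableEq A] (s : A) (β : B) (w : List (A × B)) :
    evalWord (pushFront s β w) = conjB s β * evalWord w := by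
  match w with
  | [] => simp [pushFront, evalWord_prepend]
  | (t, γ) :: v =>
    by_cases ht : t = s
    · simp [pushFront, ht, evalWord_prepend, conjB_add, mul_assoc]
    · simp [pushFront, ht, evalWord_prepend]

end Group

@[ext]
structure NormalForm (A B : Type*) [Zero B] where
  word : List (A × B)
  isReduced : IsReduced word
  offset : A

namespace NormalForm

variable {A B : Type*} [AddGroup A] [AddGroup B]

def eval (x : NormalForm A B) : Multiplicative A ∗ Multiplicative B :=
  evalWord x.word * inl (ofAdd x.offset)

theorem eval_mk_zero {w : List (A × B)} (hw : IsReduced w) :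
    eval (⟨w, hw, 0⟩ : NormalForm A B) = evalWord w := by
  rw [eval, ofAdd_zero, map_one, mul_one]

theorem fst_eval (x : NormalForm A B) : fst x.eval = ofAdd x.offset := by
  rw [eval, evalWord, map_mul, map_list_prod, List.map_map, fst_apply_inl]
  simp [Function.comp_def, fst_conjB]

variable [DecidableEq A] [DecidableEq B]

@[reducible] def shiftAction : MulAction (Multiplicative A) (NormalForm A B) where
  smul s x := ⟨shift s.toAdd x.word, isReduced_shift x.isReduced _, s.toAdd + x.offset⟩
  one_smul _ := NormalForm.ext (shift_zero _) (zero_add _)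
  mul_smul _ _ _ := NormalForm.ext (shift_shift _ _ _).symm (add_assoc _ _ _)

@[reducible] def pushAction : MulAction (Multiplicative B) (NormalForm A B) where
  smul β x := ⟨pushFront 0 β.toAdd x.word, isReduced_pushFront x.isReduced _ _, x.offset⟩
  one_smul x := NormalForm.ext (pushFront_zero x.isReduced _) rfl
  mul_smul _ _ x := NormalForm.ext (pushFront_pushFront x.isReduced _ _ _).symm rfl

instance : MulAction (Multiplicative A ∗ Multiplicative B) (NormalForm A B) :=
  .compHom _ <|
    lift (@MulAction.toPermHom _ _ _ shiftAction) (@MulAction.toPermHom _ _ _ pushAction)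

theorem inl_smul (s : A) (x : NormalForm A B) :
    (inl (ofAdd s) : Multiplicative A ∗ Multiplicative B) • x =
      ⟨shift s x.word, isReduced_shift x.isReduced _, s + x.offset⟩ := rfl

theorem inr_smul (β : B) (x : NormalForm A B) :
    (inr (ofAdd β) : Multiplicative A ∗ Multiplicative B) • x =
      ⟨pushFront 0 β x.word, isReduced_pushFront x.isReduced _ _, x.offset⟩ := rfl

theorem eval_smul (g : Multiplicative A ∗ Multiplicative B) (x : NormalForm A B) :
    (g • x).eval = g * x.eval := by
  induction g using Coprod.induction_on generalizing x with
  | inl s =>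
    rw [← ofAdd_toAdd s, inl_smul, eval, eval, ofAdd_add, map_mul, ← mul_assoc, ← mul_assoc,
      inl_mul_evalWord]
  | inr β =>
    rw [← ofAdd_toAdd β, inr_smul, eval, eval, evalWord_pushFront, mul_assoc]
    simp [conjB]
  | mul g h hg hh => rw [mul_smul, hg, hh, mul_assoc]

theorem conjB_smul {t : A} {β : B} {v : List (A × B)} (hv : IsReduced ((t, β) :: v)) (a : A) :
    conjB t β • (⟨v, (isReduced_cons.1 hv).2.2, a⟩ : NormalForm A B) = ⟨(t, β) :: v, hv, a⟩ := by
  obtain ⟨hβ, hs, -⟩ := isReduced_cons.1 hv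
  have hs' : ∀ u ∈ (shift t v).head?, u.1 ≠ 0 := by
    cases v <;> simp_all [shift, sub_eq_zero]
  have hpush : pushFront 0 β (shift t v) = (0, β) :: shift t v := by
    simpa [prepend, hβ] using pushFront_prepend hs' β 0
  rw [conjB, mul_smul, mul_smul, inl_smul, inr_smul, ← map_inv, ← ofAdd_neg, inl_smul]
  ext1
  · simp only
    rw [hpush, shift, List.map_cons, ← shift, shift_shift, neg_add_cancel, shift_zero]
    simp
  · exact neg_add_cancel_left t a

theorem evalWord_smul {w : List (A × B)} (hw : IsReduced w) (a : A) :
    evalWord w • (⟨[], isReduced_nil, a⟩ : NormalForm A B) = ⟨w, hw, a⟩ := by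
  induction w with
  | nil => exact one_smul _ _
  | cons p v ih =>
    rw [evalWord_cons, mul_smul, ih (isReduced_cons.1 hw).2.2, conjB_smul hw]

theorem eval_smul_nil (x : NormalForm A B) :
    x.eval • (⟨[], isReduced_nil, 0⟩ : NormalForm A B) = x := by
  rw [eval, mul_smul, inl_smul, add_zero]
  exact evalWord_smul x.isReduced x.offset

theorem eval_injective : Function.Injective (eval : NormalForm A B → _) :=
  Function.LeftInverse.injective (g := (· • ⟨[], isReduced_nil, 0⟩)) fun x => eval_smul_nil x

theorem eval_surjective : Function.Surjective (eval : NormalForm A B → _) := fun g =>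
  ⟨g • ⟨[], isReduced_nil, 0⟩, by rw [eval_smul, eval_mk_zero, evalWord_nil, mul_one]⟩

end NormalForm

variable {A B : Type*} [AddGroup A] [AddGroup B] [DecidableEq A] [DecidableEq B]

theorem existsUnique_isReduced_evalWord_eq {h : Multiplicative A ∗ Multiplicative B}
    (hh : fst h = 1) : ∃! w : List (A × B), IsReduced w ∧ h = evalWord w := by
  obtain ⟨⟨w, hw, a⟩, rfl⟩ := NormalForm.eval_surjective h
  obtain rfl : a = 0 := ofAdd_eq_one.1 <| (NormalForm.fst_eval _).symm.trans hh
  refine ⟨w, ⟨hw, NormalForm.eval_mk_zero hw⟩, fun v ⟨hv, hvw⟩ => ?_⟩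
  rw [← NormalForm.eval_mk_zero hv] at hvw
  exact congrArg NormalForm.word (NormalForm.eval_injective hvw).symm

end ConjNormalForm

theorem stmt_12_general (N : ℕ)
    (h : Coprod (Multiplicative (ZMod N)) (Multiplicative ℤ))
    (hh : h ∈ Subgroup.normalClosure
      {(Coprod.inr (Multiplicative.ofAdd (1 : ℤ)) :
        Coprod (Multiplicative (ZMod N)) (Multiplicative ℤ))}) :
    ∃! w : List (ZMod N × ℤ),
      (∀ x ∈ w, x.2 ≠ 0) ∧ w.Chain' (fun x y => x.1 ≠ y.1) ∧
        h = (w.map (fun x =>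
          (Coprod.inl (Multiplicative.ofAdd x.1) :
              Coprod (Multiplicative (ZMod N)) (Multiplicative ℤ))⁻¹ *
            Coprod.inr (Multiplicative.ofAdd x.2) *
            Coprod.inl (Multiplicative.ofAdd x.1))).prod := by
  have hfst : h ∈ (fst : Multiplicative (ZMod N) ∗ Multiplicative ℤ →* _).ker :=
    Subgroup.normalClosure_le_normal (by simp) hh
  have := ConjNormalForm.existsUnique_isReduced_evalWord_eq hfst
  simp only [ConjNormalForm.IsReduced, ConjNormalForm.evalWord, ConjNormalForm.conjB,
    and_assoc] at this
  exact this

/-- Normal form: every element of the normal closure of `b` in `⟨a⟩ ∗ ⟨b⟩` (`a` of order `N`,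
`b` of infinite order) has a unique expression `(b^{β₁})^{a^{t₁}} ⋯ (b^{β_l})^{a^{t_l}}` with
all `β_j ≠ 0` and `t_j ≠ t_{j+1}`. -/
theorem stmt_12 (N : ℕ) (hN : 0 < N)
    (h : Coprod (Multiplicative (ZMod N)) (Multiplicative ℤ))
    (hh : h ∈ Subgroup.normalClosure
      {(Coprod.inr (Multiplicative.ofAdd (1 : ℤ)) :
        Coprod (Multiplicative (ZMod N)) (Multiplicative ℤ))}) :
    ∃! w : List (ZMod N × ℤ),
      (∀ x ∈ w, x.2 ≠ 0) ∧ w.Chain' (fun x y => x.1 ≠ y.1) ∧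
        h = (w.map (fun x =>
          (Coprod.inl (Multiplicative.ofAdd x.1) :
              Coprod (Multiplicative (ZMod N)) (Multiplicative ℤ))⁻¹ *
            Coprod.inr (Multiplicative.ofAdd x.2) *
            Coprod.inl (Multiplicative.ofAdd x.1))).prod :=
  stmt_12_general N h hh
end

section
/- Let H be a finite 2-generated group. If there exists a central element z of prime order q such that for every generating pair {x, y} of H, at least one of x, y, xy has z as a power, then H is not a Beauville group. -/
/-- `Σ(x,y)`: the union of all conjugates of the cyclic subgroups generated by `x`, `y`
and `xy`. -/
def beauvilleSigma {H : Type*} [Group H] (x y : H) : Set H :=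
  {h | ∃ (g : H) (n : ℤ),
    h = g⁻¹ * x ^ n * g ∨ h = g⁻¹ * y ^ n * g ∨ h = g⁻¹ * (x * y) ^ n * g}

/-- A group is Beauville if it is 2-generated and admits two generating pairs whose
`Σ`-sets intersect trivially. -/
def IsBeauville (H : Type*) [Group H] : Prop :=
  ∃ x₁ y₁ x₂ y₂ : H, Subgroup.closure {x₁, y₁} = ⊤ ∧ Subgroup.closure {x₂, y₂} = ⊤ ∧
    beauvilleSigma x₁ y₁ ∩ beauvilleSigma x₂ y₂ = {1}

section Beauville

variable {H : Type*} [Group H]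

theorem mem_beauvilleSigma_of_exists_zpow {x y z : H}
    (h : (∃ n : ℤ, z = x ^ n) ∨ (∃ n : ℤ, z = y ^ n) ∨ (∃ n : ℤ, z = (x * y) ^ n)) :
    z ∈ beauvilleSigma x y := by
  rcases h with ⟨n, rfl⟩ | ⟨n, rfl⟩ | ⟨n, rfl⟩ <;> exact ⟨1, n, by simp⟩

theorem not_isBeauville_of_mem_beauvilleSigma {z : H} (hz : z ≠ 1)
    (hmem : ∀ x y : H, Subgroup.closure {x, y} = ⊤ → z ∈ beauvilleSigma x y) :
    ¬ IsBeauville H := by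
  rintro ⟨x₁, y₁, x₂, y₂, hgen₁, hgen₂, hdisj⟩
  have hz_inter : z ∈ beauvilleSigma x₁ y₁ ∩ beauvilleSigma x₂ y₂ :=
    ⟨hmem x₁ y₁ hgen₁, hmem x₂ y₂ hgen₂⟩
  rw [hdisj] at hz_inter
  exact hz hz_inter

end Beauville

theorem stmt_14_general (H : Type*) [Group H]
    (z : H) (q : ℕ) (hq : q.Prime) (ho : orderOf z = q)
    (hcov : ∀ x y : H, Subgroup.closure {x, y} = ⊤ →
      (∃ n : ℤ, z = x ^ n) ∨ (∃ n : ℤ, z = y ^ n) ∨ (∃ n : ℤ, z = (x * y) ^ n)) :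
    ¬ IsBeauville H := by
  have hz : z ≠ 1 := by
    rintro rfl
    exact hq.ne_one (by rw [← ho, orderOf_one])
  exact not_isBeauville_of_mem_beauvilleSigma hz
    fun x y hgen => mem_beauvilleSigma_of_exists_zpow (hcov x y hgen)

/-- If a finite 2-generated group has a central element `z` of prime order which is a power
of `x`, `y` or `xy` for every generating pair `{x,y}`, then it is not a Beauville group. -/
theorem stmt_14 (H : Type*) [Group H] [Finite H]
    (h2 : ∃ x y : H, Subgroup.closure {x, y} = ⊤)
    (z : H) (hz : z ∈ Subgroup.center H) (q : ℕ) (hq : q.Prime) (ho : orderOf z = q)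
    (hcov : ∀ x y : H, Subgroup.closure {x, y} = ⊤ →
      (∃ n : ℤ, z = x ^ n) ∨ (∃ n : ℤ, z = y ^ n) ∨ (∃ n : ℤ, z = (x * y) ^ n)) :
    ¬ IsBeauville H :=
  stmt_14_general H z q hq ho hcov
end

section
/- Let N ≥ 2 and let w = (w_1, ..., w_N) be a tuple of integers with w_j = 0 for all but finitely many prescribed positions, arising as the b-exponent decomposition of an element h of the free product H = <a> * <b> with a of order N. If |h| denotes the number of syllables of h in <b>, then sum_{j=1}^{N} |h_j| ≤ |h| and |h_j| ≤ ceil(|h|/2) for each j, where (h_1,...,h_N) = Phi(h) is the section decomposition. -/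
open Monoid

/-- The free product `⟨a⟩ ∗ ⟨b⟩` with `a` of order `N` and `b` of infinite order. -/
abbrev GGSFree (N : ℕ) : Type := Coprod (Multiplicative (ZMod N)) (Multiplicative ℤ)

/-- `a^k` in the free product model. -/
abbrev ggsA (N : ℕ) (k : ZMod N) : GGSFree N := Coprod.inl (Multiplicative.ofAdd k)

/-- `b^β` in the free product model. -/
abbrev ggsBpow (N : ℕ) (β : ℤ) : GGSFree N := Coprod.inr (Multiplicative.ofAdd β)

/-- `b` in the free product model. -/
abbrev ggsB (N : ℕ) : GGSFree N := ggsBpow N 1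

/-- The normal closure `L(H)` of `b`. -/
abbrev ggsL (N : ℕ) : Subgroup (GGSFree N) := Subgroup.normalClosure {ggsB N}

/-- The syllable length of `h` with respect to the factor `⟨b⟩`: the least `l` such that `h`
can be written as `a^{s₁} b^{β₁} ⋯ a^{s_l} b^{β_l} a^{s_{l+1}}`. -/
noncomputable def ggsLen (N : ℕ) (h : GGSFree N) : ℕ :=
  sInf {l : ℕ | ∃ (s : Fin (l + 1) → ZMod N) (β : Fin l → ℤ),
    h = (List.ofFn fun j : Fin l => ggsA N (s j.castSucc) * ggsBpow N (β j)).prod *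
      ggsA N (s (Fin.last l))}

/-!
Write `h` as a word `a^{s₁} b^{β₁} ⋯ a^{s_l} b^{β_l} a^c` of minimal length `l`; minimality forces
`s₂, …, s_l ≠ 0`, since otherwise two `b`-syllables merge. Collecting the powers of `a`,
`h = ∏ⱼ (b^{β_j})^{a^{k_j}}` with `k_j = -(s₁ + ⋯ + s_j)`, the leftover power of `a` being trivial
because `h ∈ L(H)`, and consecutive `k_j` differ. The factor `(b^{β_j})^{a^{k_j}}` is sent by `Φ`
into `⟨b₁⟩` at coordinate `k_j` and into `⟨a₁⟩` at every other coordinate, so `|h_i|` is at most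
the number of `j` with `k_j = i`. These numbers add up to `l`, and as no two consecutive `k_j` are
equal, each of them is at most `⌈l/2⌉`.
-/

theorem List.count_le_half_of_isChain_ne {α : Type*} [DecidableEq α] (a : α) :
    ∀ {l : List α}, l.IsChain (· ≠ ·) → l.count a ≤ (l.length + 1) / 2
  | [], _ => by simp
  | [_], _ => by simpa using List.count_le_length (a := a) (l := [_])
  | b :: c :: l, h => by
    have hbc := (List.isChain_cons_cons.mp h).1
    have ih : l.count a ≤ (l.length + 1) / 2 :=
      List.count_le_half_of_isChain_ne a (List.isChain_cons_cons.mp h).2.tail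
    simp only [List.count_cons, List.length_cons, beq_iff_eq]
    split_ifs with hc hb <;> first | exact absurd (hb.trans hc.symm) hbc | omega

namespace GGS

variable {N : ℕ}

lemma ggsA_zero : ggsA N 0 = 1 :=
  map_one _

lemma ggsA_add (k s : ZMod N) : ggsA N (k + s) = ggsA N k * ggsA N s :=
  map_mul _ _ _

lemma ggsA_neg (k : ZMod N) : ggsA N (-k) = (ggsA N k)⁻¹ :=
  map_inv _ _

lemma ggsBpow_add (β γ : ℤ) : ggsBpow N (β + γ) = ggsBpow N β * ggsBpow N γ :=
  map_mul _ _ _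

lemma ggsB_zpow (β : ℤ) : ggsB N ^ β = ggsBpow N β := by
  rw [← map_zpow, ← Int.ofAdd_mul, one_mul]

def ggsWord (N : ℕ) (L : List (ZMod N × ℤ)) (c : ZMod N) : GGSFree N :=
  (L.map fun p => ggsA N p.1 * ggsBpow N p.2).prod * ggsA N c

lemma ggsWord_nil (c : ZMod N) : ggsWord N [] c = ggsA N c := by
  simp [ggsWord]

lemma ggsWord_cons (s : ZMod N) (β : ℤ) (L : List (ZMod N × ℤ)) (c : ZMod N) :
    ggsWord N ((s, β) :: L) c = ggsA N s * ggsBpow N β * ggsWord N L c := by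
  simp [ggsWord, mul_assoc]

lemma ggsLen_eq_sInf (h : GGSFree N) :
    ggsLen N h = sInf {l | ∃ L c, L.length = l ∧ h = ggsWord N L c} := by
  refine congrArg sInf (Set.ext fun l => ?_)
  constructor
  · rintro ⟨s, β, rfl⟩
    exact ⟨List.ofFn fun j => (s j.castSucc, β j), s (Fin.last l), by simp,
      by simp [ggsWord, List.map_ofFn, Function.comp_def]⟩
  · rintro ⟨L, c, rfl, rfl⟩
    refine ⟨Fin.snoc (fun j : Fin L.length => L[j].1) c, fun j => L[j].2, ?_⟩
    simp [ggsWord, List.ofFn_getElem_eq_map L fun p => ggsA N p.1 * ggsBpow N p.2]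

lemma exists_ggsA_mul_ggsWord (k : ZMod N) (L : List (ZMod N × ℤ)) (c : ZMod N) :
    ∃ L' c', L'.length = L.length ∧ ggsA N k * ggsWord N L c = ggsWord N L' c' := by
  cases L with
  | nil => exact ⟨[], k + c, rfl, by simp only [ggsWord_nil, ggsA_add]⟩
  | cons p T =>
    obtain ⟨s, β⟩ := p
    exact ⟨(k + s, β) :: T, c, rfl, by simp only [ggsWord_cons, ggsA_add, mul_assoc]⟩

lemma exists_ggsWord_mul_ggsWord (L : List (ZMod N × ℤ)) (c : ZMod N)
    (L' : List (ZMod N × ℤ)) (c' : ZMod N) :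
    ∃ L'' c'', L''.length = L.length + L'.length ∧
      ggsWord N L c * ggsWord N L' c' = ggsWord N L'' c'' := by
  obtain ⟨L₀, c₀, hlen, heq⟩ := exists_ggsA_mul_ggsWord c L' c'
  refine ⟨L ++ L₀, c₀, by simp [hlen], ?_⟩
  simp only [ggsWord, List.map_append, List.prod_append, mul_assoc] at heq ⊢
  rw [heq]

lemma exists_ggsWord_eq (h : GGSFree N) : ∃ L c, h = ggsWord N L c := by
  induction h using Coprod.induction_on with
  | inl m => exact ⟨[], m.toAdd, (ggsWord_nil _).symm⟩
  | inr n => exact ⟨[(0, n.toAdd)], 0, by simp [ggsWord, ggsA_zero, ggsBpow]⟩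
  | mul g g' hg hg' =>
    obtain ⟨L, c, rfl⟩ := hg
    obtain ⟨L', c', rfl⟩ := hg'
    obtain ⟨L'', c'', -, heq⟩ := exists_ggsWord_mul_ggsWord L c L' c'
    exact ⟨L'', c'', heq⟩

lemma ggsLen_le_length {h : GGSFree N} {L : List (ZMod N × ℤ)} {c : ZMod N}
    (hw : h = ggsWord N L c) : ggsLen N h ≤ L.length := by
  rw [ggsLen_eq_sInf]
  exact Nat.sInf_le ⟨L, c, rfl, hw⟩

lemma exists_ggsWord_length_eq_ggsLen (h : GGSFree N) :
    ∃ L c, L.length = ggsLen N h ∧ h = ggsWord N L c := by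
  obtain ⟨L, c, hw⟩ := exists_ggsWord_eq h
  have := Nat.sInf_mem (s := {l | ∃ L c, L.length = l ∧ h = ggsWord N L c}) ⟨_, L, c, rfl, hw⟩
  rwa [← ggsLen_eq_sInf] at this

lemma ggsLen_mul_le (g g' : GGSFree N) : ggsLen N (g * g') ≤ ggsLen N g + ggsLen N g' := by
  obtain ⟨L, c, hL, rfl⟩ := exists_ggsWord_length_eq_ggsLen g
  obtain ⟨L', c', hL', rfl⟩ := exists_ggsWord_length_eq_ggsLen g'
  obtain ⟨L'', c'', hlen, heq⟩ := exists_ggsWord_mul_ggsWord L c L' c'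
  rw [heq, ← hL, ← hL', ← hlen]
  exact ggsLen_le_length rfl

lemma ggsLen_eq_zero_of_mem_range_inl {g : GGSFree N}
    (hg : g ∈ (Coprod.inl : Multiplicative (ZMod N) →* GGSFree N).range) : ggsLen N g = 0 := by
  obtain ⟨m, rfl⟩ := hg
  exact Nat.le_zero.mp (ggsLen_le_length (L := []) (c := m.toAdd) (ggsWord_nil _).symm)

lemma ggsLen_le_one_of_mem_range_inr {g : GGSFree N}
    (hg : g ∈ (Coprod.inr : Multiplicative ℤ →* GGSFree N).range) : ggsLen N g ≤ 1 := by
  obtain ⟨n, rfl⟩ := hg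
  exact ggsLen_le_length (L := [(0, n.toAdd)]) (c := 0) (by simp [ggsWord, ggsA_zero, ggsBpow])

lemma exists_shorter_ggsWord : ∀ (L : List (ZMod N × ℤ)) (c : ZMod N),
    (∃ p ∈ L.tail, p.1 = 0) → ∃ L', L'.length < L.length ∧ ggsWord N L' c = ggsWord N L c
  | [], _, h | [_], _, h => by simp at h
  | (s, β) :: (s', β') :: T, c, h => by
    by_cases hs' : s' = 0
    · subst hs'
      exact ⟨(s, β + β') :: T, by simp,
        by simp only [ggsWord_cons, ggsA_zero, ggsBpow_add, one_mul, mul_assoc]⟩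
    · obtain ⟨T', hlen, heq⟩ := exists_shorter_ggsWord ((s', β') :: T) c (by simpa [hs'] using h)
      exact ⟨(s, β) :: T', by simpa using hlen, by rw [ggsWord_cons s β T', heq, ← ggsWord_cons]⟩

lemma exists_reduced_ggsWord (h : GGSFree N) :
    ∃ L c, L.length = ggsLen N h ∧ h = ggsWord N L c ∧ ∀ p ∈ L.tail, p.1 ≠ 0 := by
  obtain ⟨L, c, hL, hw⟩ := exists_ggsWord_length_eq_ggsLen h
  refine ⟨L, c, hL, hw, fun p hp hp0 => ?_⟩
  obtain ⟨L', hlen, heq⟩ := exists_shorter_ggsWord L c ⟨p, hp, hp0⟩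
  have := ggsLen_le_length (hw.trans heq.symm)
  omega

lemma conj_mem_ggsL (k : ZMod N) : (ggsA N k)⁻¹ * ggsB N * ggsA N k ∈ ggsL N := by
  simpa using (Subgroup.normalClosure_normal (s := {ggsB N})).conj_mem _
    (Subgroup.subset_normalClosure rfl) (ggsA N k)⁻¹

def conjB (N : ℕ) (k : ZMod N) : ggsL N :=
  ⟨(ggsA N k)⁻¹ * ggsB N * ggsA N k, conj_mem_ggsL k⟩

lemma coe_conjB_zpow (k : ZMod N) (β : ℤ) :
    ((conjB N k ^ β : ggsL N) : GGSFree N) = (ggsA N k)⁻¹ * ggsBpow N β * ggsA N k := by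
  have := conj_zpow (i := β) (a := (ggsA N k)⁻¹) (b := ggsB N)
  rwa [inv_inv, ggsB_zpow] at this

def conjSyllables (k : ZMod N) : List (ZMod N × ℤ) → List (ZMod N × ℤ)
  | [] => []
  | (s, β) :: T => (k - s, β) :: conjSyllables (k - s) T

lemma length_conjSyllables (k : ZMod N) :
    ∀ L : List (ZMod N × ℤ), (conjSyllables k L).length = L.length
  | [] => rfl
  | (s, _) :: T => by simp [conjSyllables, length_conjSyllables (k - s) T]

lemma isChain_conjSyllables : ∀ (k : ZMod N) (L : List (ZMod N × ℤ)), (∀ p ∈ L.tail, p.1 ≠ 0) →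
    ((conjSyllables k L).map Prod.fst).IsChain (· ≠ ·)
  | _, [], _ | _, [_], _ => by simp [conjSyllables]
  | k, (s, β) :: (s', β') :: T, h => by
    have ih := isChain_conjSyllables (k - s) ((s', β') :: T)
      fun p hp => h p (List.mem_cons_of_mem _ hp)
    simp only [conjSyllables, List.map_cons] at ih ⊢
    refine List.isChain_cons_cons.mpr ⟨?_, ih⟩
    intro hc
    exact h (s', β') (by simp) (by linear_combination hc)

lemma exists_inv_ggsA_mul_ggsWord : ∀ (k : ZMod N) (L : List (ZMod N × ℤ)) (c : ZMod N),
    ∃ r, (ggsA N k)⁻¹ * ggsWord N L c =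
      (((conjSyllables k L).map fun p => conjB N p.1 ^ p.2).prod : ggsL N) * ggsA N r
  | k, [], c => ⟨-k + c, by simp [conjSyllables, ggsWord_nil, ggsA_add, ggsA_neg]⟩
  | k, (s, β) :: T, c => by
    obtain ⟨r, hr⟩ := exists_inv_ggsA_mul_ggsWord (k - s) T c
    refine ⟨r, ?_⟩
    simp only [conjSyllables, List.map_cons, List.prod_cons, Subgroup.coe_mul, coe_conjB_zpow,
      mul_assoc, ← hr, ggsWord_cons]
    rw [sub_eq_neg_add, ggsA_add, ggsA_neg]
    group

lemma fst_eq_one_of_mem_ggsL {g : GGSFree N} (hg : g ∈ ggsL N) : Coprod.fst g = 1 := by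
  refine Subgroup.normalClosure_le_normal (N := Coprod.fst.ker) ?_ hg
  simp

theorem exists_conjB_decomposition (x : ggsL N) :
    ∃ P : List (ZMod N × ℤ), P.length = ggsLen N x ∧ (P.map Prod.fst).IsChain (· ≠ ·) ∧
      x = (P.map fun p => conjB N p.1 ^ p.2).prod := by
  obtain ⟨L, c, hL, hw, hred⟩ := exists_reduced_ggsWord (x : GGSFree N)
  obtain ⟨r, hr⟩ := exists_inv_ggsA_mul_ggsWord 0 L c
  set y := ((conjSyllables 0 L).map fun p => conjB N p.1 ^ p.2).prod
  rw [ggsA_zero, inv_one, one_mul, ← hw] at hr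
  have hr1 : ggsA N r = 1 := by
    have hmem : ggsA N r ∈ ggsL N := by
      rw [eq_inv_mul_of_mul_eq hr.symm]
      exact mul_mem (inv_mem y.2) x.2
    rw [← map_one Coprod.inl, ← fst_eq_one_of_mem_ggsL hmem]
    rfl
  exact ⟨conjSyllables 0 L, by rw [length_conjSyllables, hL], isChain_conjSyllables 0 L hred,
    Subtype.ext (by rw [hr, hr1, mul_one])⟩

section Sections

variable {N₁ : ℕ} (Φ : ggsL N →* (ZMod N → GGSFree N₁))
  (hinl : ∀ k i, i ≠ k →
    Φ (conjB N k) i ∈ (Coprod.inl : Multiplicative (ZMod N₁) →* GGSFree N₁).range)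
  (hinr : ∀ k, Φ (conjB N k) k ∈ (Coprod.inr : Multiplicative ℤ →* GGSFree N₁).range)
include hinl hinr

lemma ggsLen_apply_prod_le_count (P : List (ZMod N × ℤ)) (i : ZMod N) :
    ggsLen N₁ (Φ (P.map fun p => conjB N p.1 ^ p.2).prod i) ≤ (P.map Prod.fst).count i := by
  induction P with
  | nil => simp [ggsLen_eq_zero_of_mem_range_inl (one_mem _)]
  | cons p T ih =>
    obtain ⟨k, β⟩ := p
    simp only [List.map_cons, List.prod_cons, map_mul, map_zpow, Pi.mul_apply, Pi.pow_apply,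
      List.count_cons, beq_iff_eq]
    refine (ggsLen_mul_le _ _).trans (add_comm (ggsLen N₁ _) _ ▸ Nat.add_le_add ih ?_)
    split_ifs with hk
    · exact ggsLen_le_one_of_mem_range_inr (zpow_mem (hk ▸ hinr k) β)
    · exact (ggsLen_eq_zero_of_mem_range_inl (zpow_mem (hinl k i (Ne.symm hk)) β)).le

theorem sum_ggsLen_apply_le [NeZero N] (x : ggsL N) :
    ∑ i, ggsLen N₁ (Φ x i) ≤ ggsLen N x := by
  obtain ⟨P, hP, -, rfl⟩ := exists_conjB_decomposition x
  calc ∑ i, ggsLen N₁ (Φ (P.map fun p => conjB N p.1 ^ p.2).prod i)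
      ≤ ∑ i, (P.map Prod.fst).count i :=
        Finset.sum_le_sum fun i _ => ggsLen_apply_prod_le_count Φ hinl hinr P i
    _ = ggsLen N (P.map fun p => conjB N p.1 ^ p.2).prod := by
        simp_rw [← Multiset.coe_count]
        rw [Multiset.sum_count_eq_card (by simp), Multiset.coe_card, List.length_map, hP]

theorem ggsLen_apply_le_half (x : ggsL N) (i : ZMod N) :
    ggsLen N₁ (Φ x i) ≤ (ggsLen N x + 1) / 2 := by
  obtain ⟨P, hP, hchain, rfl⟩ := exists_conjB_decomposition x
  calc ggsLen N₁ (Φ (P.map fun p => conjB N p.1 ^ p.2).prod i)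
      ≤ (P.map Prod.fst).count i := ggsLen_apply_prod_le_count Φ hinl hinr P i
    _ ≤ ((P.map Prod.fst).length + 1) / 2 := List.count_le_half_of_isChain_ne i hchain
    _ = _ := by rw [List.length_map, hP]

end Sections

end GGS

open GGS in
theorem stmt_18_general (N N₁ M : ℕ) [NeZero N] (e : ℕ → ℤ)
    (Φ : ggsL N →* (ZMod N → GGSFree N₁))
    (hΦ : ∀ (k : ZMod N) (x : ggsL N),
      (x : GGSFree N) = (ggsA N k)⁻¹ * ggsB N * ggsA N k →
      Φ x = fun i =>
        (fun j : ZMod N => if j = 0 then ggsB N₁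
          else if j.val ≤ M - 1 then ggsA N₁ ((e j.val : ZMod N₁)) else 1) (i - k))
    (x : ggsL N) :
    (∑ i : ZMod N, ggsLen N₁ (Φ x i)) ≤ ggsLen N (x : GGSFree N) ∧
      ∀ i : ZMod N, ggsLen N₁ (Φ x i) ≤ (ggsLen N (x : GGSFree N) + 1) / 2 := by
  have hinl : ∀ k i, i ≠ k →
      Φ (conjB N k) i ∈ (Coprod.inl : Multiplicative (ZMod N₁) →* _).range := by
    intro k i hik
    rw [hΦ k _ rfl]
    dsimp only
    rw [if_neg (sub_ne_zero.mpr hik)]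
    split_ifs
    exacts [⟨_, rfl⟩, one_mem _]
  have hinr : ∀ k, Φ (conjB N k) k ∈ (Coprod.inr : Multiplicative ℤ →* _).range := by
    intro k
    rw [hΦ k _ rfl]
    dsimp only
    rw [sub_self, if_pos rfl]
    exact ⟨_, rfl⟩
  exact ⟨sum_ggsLen_apply_le Φ hinl hinr x, ggsLen_apply_le_half Φ hinl hinr x⟩

/-- Lemma 3.2: if `Φ : L(H) → H₁^N` sends each `b^{a^k}` to the cyclic shift by `k` of the
tuple `(a₁^{e₁},…,a₁^{e_{M−1}},1,…,1,b₁)` (with `M − 1 < N`), then for `h ∈ L(H)` with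
sections `(h₁,…,h_N)` one has `∑_j |h_j| ≤ |h|` and `|h_j| ≤ ⌈|h|/2⌉` for each `j`. -/
theorem stmt_18 (N N₁ M : ℕ) [NeZero N] [NeZero N₁] (hN : 2 ≤ N) (hM1 : 1 ≤ M)
    (hM : M - 1 < N) (e : ℕ → ℤ)
    (Φ : ggsL N →* (ZMod N → GGSFree N₁))
    (hΦ : ∀ (k : ZMod N) (x : ggsL N),
      (x : GGSFree N) = (ggsA N k)⁻¹ * ggsB N * ggsA N k →
      Φ x = fun i =>
        (fun j : ZMod N => if j = 0 then ggsB N₁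
          else if j.val ≤ M - 1 then ggsA N₁ ((e j.val : ZMod N₁)) else 1) (i - k))
    (x : ggsL N) :
    (∑ i : ZMod N, ggsLen N₁ (Φ x i)) ≤ ggsLen N (x : GGSFree N) ∧
      ∀ i : ZMod N, ggsLen N₁ (Φ x i) ≤ (ggsLen N (x : GGSFree N) + 1) / 2 :=
  stmt_18_general N N₁ M e Φ hΦ x
end
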